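/- For every n ≥ 1, ∑_{π ∈ P₂(2n), :π: = 1̄} (-1)^{|π|} q^{‖π‖} = (1-q)^{n-1}, where 1̄ = {{i, 2n+1−i} : 1 ≤ i ≤ n} is the fully nested noncrossing pairpartition and :π: denotes the Wick (crossing-resolution) map. -/

import Mathlib

/-- The number of inversions (= Coxeter length) of a permutation. -/
def inversions {n : ℕ} (σ : Equiv.Perm (Fin n)) : ℕ :=
  (Finset.univ.filter fun p : Fin n × Fin n => p.1 < p.2 ∧ σ p.2 < σ p.1).card

/-- The colour-length `‖σ‖ = #S_σ` of a permutation of `{0,…,n-1}`: the number of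
Coxeter generators `(i, i+1)`, `0 ≤ i < n-1`, occurring in a reduced word for `σ`;
equivalently the number of `i` such that `σ` does not preserve `{0,…,i}`. -/
def colourLength {n : ℕ} (σ : Equiv.Perm (Fin n)) : ℕ :=
  ((Finset.range (n - 1)).filter fun i =>
    ∃ x : Fin n, (x : ℕ) ≤ i ∧ i < (σ x : ℕ)).card

/-!
Write `q ^ ‖σ‖ = ∏_{i < n-1} (q + (1 - q)·[σ preserves {0,…,i}])` and expand the product. With
`(-1)^{|σ|} = sign σ`, the sum becomes `∑_T (1-q)^{|T|} q^{n-1-|T|} ∑_{σ ∈ 𝔖_T} sign σ`, where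
`T ⊆ {0,…,n-2}` and `𝔖_T` is the Young subgroup of permutations preserving every `{0,…,i}`,
`i ∈ T`. If some `j < n-1` is missing from `T`, then `𝔖_T` contains the transposition `(j j+1)`
and its signs cancel; for `T = {0,…,n-2}` the group `𝔖_T` is trivial. Only `(1-q)^{n-1}` survives.
-/

open Finset Equiv Equiv.Perm

theorem Finset.pow_card_filter_not_eq_sum_powerset {R ι : Type*} [CommRing R] [DecidableEq ι]
    (s : Finset ι) (p : ι → Prop) [DecidablePred p] (q : R) :
    q ^ #{i ∈ s | ¬p i} =
      ∑ t ∈ s.powerset, (1 - q) ^ #t * q ^ (#s - #t) * if ∀ i ∈ t, p i then 1 else 0 := by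
  calc q ^ #{i ∈ s | ¬p i} = ∏ i ∈ s, ((1 - q) * (if p i then 1 else 0) + q) := by
        rw [← prod_const, prod_filter]
        exact prod_congr rfl fun i _ => by split_ifs <;> ring
    _ = _ := by
        rw [prod_add]
        refine sum_congr rfl fun t ht => ?_
        rw [prod_mul_distrib, prod_const, prod_boole, prod_const,
          card_sdiff_of_subset (mem_powerset.1 ht)]
        ring

namespace Equiv.Perm

variable {n : ℕ}

theorem signAux_eq_sign (σ : Perm (Fin n)) : signAux σ = sign σ := by
  induction σ using swap_induction_on with
  | one => simp
  | swap_mul f x y hxy hf => rw [signAux_mul, signAux_swap hxy, sign_mul, sign_swap hxy, hf]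

theorem neg_one_pow_inversions (σ : Perm (Fin n)) : (-1 : ℤˣ) ^ inversions σ = sign σ := by
  rw [← signAux_eq_sign, signAux, prod_ite, prod_const, prod_const_one, mul_one, inversions]
  congr 1
  refine card_nbij' (fun p => ⟨p.2, p.1⟩) (fun p => (p.2, p.1)) ?_ ?_ (fun _ _ => rfl)
    (fun _ _ => rfl)
  · rintro ⟨a, b⟩ hab
    simp only [mem_coe, mem_filter, mem_univ, true_and] at hab
    simpa [mem_finPairsLT] using ⟨hab.1, hab.2.le⟩
  · rintro ⟨a, b⟩ hab
    simp only [mem_coe, mem_filter, mem_finPairsLT] at hab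
    simpa using ⟨hab.1, hab.2.lt_of_ne fun h => hab.1.ne' (σ.injective h)⟩

def PreservesIic (σ : Perm (Fin n)) (i : ℕ) : Prop :=
  Set.MapsTo σ {x | (x : ℕ) ≤ i} {x | (x : ℕ) ≤ i}

instance (σ : Perm (Fin n)) (i : ℕ) : Decidable (PreservesIic σ i) :=
  inferInstanceAs (Decidable (∀ x : Fin n, (x : ℕ) ≤ i → (σ x : ℕ) ≤ i))

theorem colourLength_eq_card_filter_not_preservesIic (σ : Perm (Fin n)) :
    colourLength σ = #{i ∈ range (n - 1) | ¬PreservesIic σ i} := by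
  simp [colourLength, PreservesIic, Set.MapsTo]

theorem preservesIic_swap {i j : ℕ} (hij : i ≠ j) (hj : j + 1 < n) :
    PreservesIic (swap (⟨j, by omega⟩ : Fin n) ⟨j + 1, hj⟩) i := by
  intro x (hx : (x : ℕ) ≤ i)
  show ((swap _ _ x : Fin n) : ℕ) ≤ i
  rw [swap_apply_def]
  split_ifs with h₁ h₂ <;> simp only [Fin.ext_iff] at * <;> omega

theorem eq_one_of_forall_preservesIic {σ : Perm (Fin n)}
    (h : ∀ i ∈ range (n - 1), PreservesIic σ i) : σ = 1 := by
  have hle : ∀ x ∈ (univ : Finset (Fin n)), (σ x : ℕ) ≤ x := fun x _ => by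
    by_cases hx : (x : ℕ) < n - 1
    · exact h x (mem_range.2 hx) (show (x : ℕ) ≤ x from le_rfl)
    · have := (σ x).isLt
      omega
  have hsum : ∑ x, (σ x : ℕ) = ∑ x : Fin n, (x : ℕ) := Equiv.sum_comp σ (fun x => (x : ℕ))
  ext x
  exact (sum_eq_sum_iff_of_le hle).1 hsum x (mem_univ x)

theorem sum_sign_eq_zero_of_swap_mul_mem {α : Type*} [DecidableEq α] [Fintype α]
    {s : Finset (Perm α)} {x y : α} (hxy : x ≠ y) (hs : ∀ σ ∈ s, swap x y * σ ∈ s) :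
    ∑ σ ∈ s, (sign σ : ℤ) = 0 := by
  have hflip : ∑ σ ∈ s, (sign σ : ℤ) = ∑ σ ∈ s, (sign (swap x y * σ) : ℤ) :=
    (sum_nbij' (swap x y * ·) (swap x y * ·) hs hs (by simp [← mul_assoc])
      (by simp [← mul_assoc]) (fun _ _ => rfl)).symm
  simp only [sign_mul, sign_swap hxy, Units.val_neg, neg_one_mul, sum_neg_distrib] at hflip
  omega

theorem sum_sign_filter_forall_preservesIic_of_notMem {U : Finset ℕ} {j : ℕ}
    (hj : j < n - 1) (hjU : j ∉ U) :
    ∑ σ : Perm (Fin n) with ∀ i ∈ U, PreservesIic σ i, (sign σ : ℤ) = 0 := by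
  refine sum_sign_eq_zero_of_swap_mul_mem (x := ⟨j, by omega⟩) (y := ⟨j + 1, by omega⟩)
    (by simp) fun σ hσ => ?_
  simp only [mem_filter, mem_univ, true_and] at hσ ⊢
  exact fun i hi => (preservesIic_swap (ne_of_mem_of_not_mem hi hjU) _).comp (hσ i hi)

theorem sum_sign_filter_forall_preservesIic_of_range_subset {U : Finset ℕ}
    (hU : range (n - 1) ⊆ U) :
    ∑ σ : Perm (Fin n) with ∀ i ∈ U, PreservesIic σ i, (sign σ : ℤ) = 1 := by
  have hone : ({σ : Perm (Fin n) | ∀ i ∈ U, PreservesIic σ i} : Finset _) = {1} := by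
    ext σ
    simp only [mem_filter, mem_univ, true_and, mem_singleton]
    refine ⟨fun hσ => eq_one_of_forall_preservesIic fun i hi => hσ i (hU hi), ?_⟩
    rintro rfl i _
    exact Set.mapsTo_id _
  rw [hone, sum_singleton, sign_one, Units.val_one]

end Equiv.Perm

theorem stmt_17_general (n : ℕ) (q : ℝ) :
    ∑ σ : Equiv.Perm (Fin n), (-1 : ℝ) ^ inversions σ * q ^ colourLength σ =
      (1 - q) ^ (n - 1) := by
  set s := range (n - 1)
  have hsign (σ : Perm (Fin n)) : (-1 : ℝ) ^ inversions σ = ((sign σ : ℤ) : ℝ) := by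
    rw [← neg_one_pow_inversions]
    norm_num
  calc ∑ σ : Perm (Fin n), (-1 : ℝ) ^ inversions σ * q ^ colourLength σ
      = ∑ t ∈ s.powerset, (1 - q) ^ #t * q ^ (#s - #t) *
          ((∑ σ : Perm (Fin n) with ∀ i ∈ t, PreservesIic σ i, (sign σ : ℤ) : ℤ) : ℝ) := by
        simp_rw [hsign, colourLength_eq_card_filter_not_preservesIic,
          pow_card_filter_not_eq_sum_powerset, mul_sum]
        rw [sum_comm]
        refine sum_congr rfl fun t _ => ?_
        rw [Int.cast_sum, mul_sum, sum_filter]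
        exact sum_congr rfl fun σ _ => by split_ifs <;> ring
    _ = (1 - q) ^ #s * q ^ (#s - #s) * 1 := by
        refine (sum_eq_single_of_mem s (mem_powerset_self s) fun t ht hts => ?_).trans ?_
        · obtain ⟨j, hjs, hjt⟩ :=
            exists_of_ssubset (ssubset_of_subset_of_ne (mem_powerset.1 ht) hts)
          rw [sum_sign_filter_forall_preservesIic_of_notMem (mem_range.1 hjs) hjt, Int.cast_zero,
            mul_zero]
        · rw [sum_sign_filter_forall_preservesIic_of_range_subset subset_rfl, Int.cast_one]
    _ = (1 - q) ^ (n - 1) := by simp [s]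

/-- The identity `∑_{π ∈ P₂(2n), :π: = 1̄} (-1)^{|π|} q^{‖π‖} = (1-q)^{n-1}`: since the
pairpartitions `π` with Wick image `:π: = 1̄` are exactly `{σ̄ : σ ∈ 𝔖_n}`, with
`|σ̄| = |σ|` the Coxeter length and `‖σ̄‖ = ‖σ‖` the colour-length, this is
equivalently `∑_{σ ∈ 𝔖_n} (-1)^{|σ|} q^{‖σ‖} = (1-q)^{n-1}`. -/
theorem stmt_17 (n : ℕ) (hn : 1 ≤ n) (q : ℝ) :
    ∑ σ : Equiv.Perm (Fin n), (-1 : ℝ) ^ inversions σ * q ^ colourLength σ =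
      (1 - q) ^ (n - 1) :=
  stmt_17_general n q
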